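/- arXiv:1711.11234 — 2 statements merged into one kernel-verified Lean document; each statement's English description precedes it below -/
import Mathlib

section
/- Let g be a root-reductive Lie algebra with splitting maximal toral subalgebra h and Dynkin Borel subalgebra b ⊇ h, and let M be an indecomposable object of the extended category O-bar. Then every g-module endomorphism φ of M is either an automorphism or locally nilpotent, i.e., for every v ∈ M there exists k ∈ ℤ≥0 with φ^k(v) = 0. -/
/-! Fitting's lemma, one weight space at a time: `φ` preserves each finite-dimensional weight
space, on which a large power `φⁿ` splits it as `ker φⁿ ⊕ im φⁿ`. Since `φ` commutes with the
projections onto the weight spaces, these splittings assemble into a decomposition of `M` as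
the direct sum of the submodules `⋃ₖ ker φᵏ` and `⋂ₖ im φᵏ`. Indecomposability kills one of
them: if the first vanishes `φ` is bijective, if the second vanishes it is locally nilpotent. -/
noncomputable section
namespace Paper

variable (K : Type) [Field K] [IsAlgClosed K] [CharZero K]
variable (g : Type) [LieRing g] [LieAlgebra K g]

def adWeightSpace (h : LieSubalgebra K g) (α : Module.Dual K h) : Submodule K g where
  carrier := {x | ∀ H : h, ⁅(H : g), x⁆ = α H • x}
  add_mem' := by intro a b ha hb H; rw [lie_add, ha H, hb H, smul_add]
  zero_mem' := by intro H; rw [lie_zero, smul_zero]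
  smul_mem' := by intro c x hx H; rw [lie_smul, hx H, smul_comm]

def IsRootOf (h : LieSubalgebra K g) (α : Module.Dual K h) : Prop :=
  α ≠ 0 ∧ adWeightSpace K g h α ≠ ⊥

def IsToralIn (s t : LieSubalgebra K g) : Prop :=
  t ≤ s ∧ IsLieAbelian t ∧
    s.toSubmodule ≤ ⨆ α : Module.Dual K t, s.toSubmodule ⊓ adWeightSpace K g t α

def IsMaxToralIn (s t : LieSubalgebra K g) : Prop :=
  IsToralIn K g s t ∧ ∀ t' : LieSubalgebra K g, IsToralIn K g s t' → t ≤ t' → t' = t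

/-- A root-reductive Lie algebra `g` together with a splitting maximal toral subalgebra `h`
and a splitting Borel subalgebra `b ⊇ h` determined by a set `pos` of positive roots. -/
structure Setup where
  /-- the exhausting chain of finite-dimensional reductive subalgebras -/
  F : ℕ → LieSubalgebra K g
  F_mono : Monotone F
  F_exhaust : ∀ x : g, ∃ n, x ∈ F n
  F_findim : ∀ n, FiniteDimensional K (F n)
  /-- each `F n` is reductive: every abelian ideal is central -/
  F_reductive : ∀ n, ∀ I : LieIdeal K (F n), IsLieAbelian I → I ≤ LieAlgebra.center K (F n)
  /-- the nested chain of Cartan subalgebras witnessing the root inclusions -/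
  C : ℕ → LieSubalgebra K g
  C_mono : Monotone C
  C_le : ∀ n, C n ≤ F n
  C_cartan : ∀ n, (LieSubalgebra.comap (F n).incl (C n)).IsCartanSubalgebra
  /-- each inclusion `F n ↪ F (n+1)` is a root inclusion with respect to `C (n+1)`:
  every root space of `F n` relative to `C n` is a root space of `F (n+1)` -/
  C_rootIncl : ∀ n, ∀ α : Module.Dual K (C n), α ≠ 0 →
    (F n).toSubmodule ⊓ adWeightSpace K g (C n) α ≠ ⊥ →
    ∃ β : Module.Dual K (C (n + 1)),
      (F n).toSubmodule ⊓ adWeightSpace K g (C n) α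
        = (F (n + 1)).toSubmodule ⊓ adWeightSpace K g (C (n + 1)) β
  /-- the splitting maximal toral subalgebra -/
  h : LieSubalgebra K g
  h_maxToral : ∀ n, IsMaxToralIn K g (F n) (h ⊓ F n)
  /-- `g` is the direct sum of its `h`-weight spaces -/
  h_indep : iSupIndep fun α : Module.Dual K h => adWeightSpace K g h α
  h_span : (⨆ α : Module.Dual K h, adWeightSpace K g h α) = ⊤
  /-- the set `Δ⁺` of positive roots -/
  pos : Set (Module.Dual K h)
  pos_root : ∀ α ∈ pos, IsRootOf K g h α
  pos_add : ∀ α ∈ pos, ∀ β ∈ pos, IsRootOf K g h (α + β) → α + β ∈ pos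
  pos_polar : ∀ α : Module.Dual K h, IsRootOf K g h α → (α ∈ pos ↔ ¬(-α ∈ pos))
  neg_add : ∀ α β : Module.Dual K h, IsRootOf K g h α → IsRootOf K g h β →
    α ∉ pos → β ∉ pos → IsRootOf K g h (α + β) → α + β ∉ pos
  /-- the splitting Borel subalgebra -/
  b : LieSubalgebra K g
  b_eq : b.toSubmodule = h.toSubmodule ⊔ ⨆ α ∈ pos, adWeightSpace K g h α


variable {K g}

namespace Setup

variable (S : Setup K g)

/-- `h ∩ g_n`. -/
def hn (n : ℕ) : LieSubalgebra K g := S.h ⊓ S.F n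

/-- restriction of a functional on `h` to `h ∩ g_n`. -/
def resDual (n : ℕ) (lam : Module.Dual K S.h) : Module.Dual K (S.hn n) :=
  lam.comp (LieSubalgebra.inclusion (inf_le_left : S.hn n ≤ S.h)).toLinearMap

/-- the `α`-root space of `g_n` relative to `h ∩ g_n`. -/
def rootSpaceN (n : ℕ) (α : Module.Dual K (S.hn n)) : Submodule K g :=
  (S.F n).toSubmodule ⊓ adWeightSpace K g (S.hn n) α

/-- the set of `b`-positive roots of `g_n`. -/
def posRootsN (n : ℕ) : Set (Module.Dual K (S.hn n)) :=
  {α | α ≠ 0 ∧ S.rootSpaceN n α ≠ ⊥ ∧ S.rootSpaceN n α ≤ S.b.toSubmodule}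

/-- `ρ_n`, the half sum of the positive roots of `g_n` with respect to `b ∩ g_n`. -/
def rhoN (n : ℕ) : Module.Dual K (S.hn n) :=
  (2 : K)⁻¹ • ∑ᶠ α ∈ S.posRootsN n, α

/-- `α` is a simple `b`-positive root: it is positive and cannot be written as a sum of
two or more positive roots. -/
def IsSimpleRoot (α : Module.Dual K S.h) : Prop :=
  α ∈ S.pos ∧ ¬∃ s : Multiset (Module.Dual K S.h),
    2 ≤ Multiset.card s ∧ (∀ β ∈ s, β ∈ S.pos) ∧ s.sum = α

/-- `b` is a Dynkin Borel subalgebra: it is generated, as a Lie subalgebra, by `h` together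
with the simple root spaces. -/
def IsDynkin : Prop :=
  S.b = LieSubalgebra.lieSpan K g
    ((S.h : Set g) ∪ ⋃ α ∈ {α | S.IsSimpleRoot α}, (adWeightSpace K g S.h α : Set g))

/-- the partial order `≼` on `h^*`: `lam ≼ mu` iff `mu - lam` is a `ℤ≥0`-linear combination
of positive roots. -/
def wle (lam mu : Module.Dual K S.h) : Prop :=
  ∃ s : Multiset (Module.Dual K S.h), (∀ β ∈ s, β ∈ S.pos) ∧ mu - lam = s.sum

/-- `g` is locally semisimple: each `g_n` is a semisimple Lie algebra. -/
def IsLocallySemisimple : Prop := ∀ n, LieAlgebra.IsSemisimple K (S.F n)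

end Setup


/-- the universal enveloping algebra of `g`. -/
abbrev Env (K g : Type) [Field K] [LieRing g] [LieAlgebra K g] : Type :=
  UniversalEnvelopingAlgebra K g

namespace Setup

variable {K : Type} [Field K] [IsAlgClosed K] [CharZero K]
variable {g : Type} [LieRing g] [LieAlgebra K g]
variable (S : Setup K g)

/-- the nilpotent radical `n⁺ = ⨁_{α ∈ Δ⁺} g^α` of `b`, as a subspace of `g`. -/
def nplus : Submodule K g := ⨆ α ∈ S.pos, adWeightSpace K g S.h α

/-- the left ideal of `U(g)` generated by `n⁺` and the elements `H - lam(H)`, `H ∈ h`. -/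
def vermaIdeal (lam : Module.Dual K S.h) : Submodule (Env K g) (Env K g) :=
  Submodule.span (Env K g)
    ((UniversalEnvelopingAlgebra.ι K '' (S.nplus : Set g)) ∪
      Set.range fun H : S.h =>
        UniversalEnvelopingAlgebra.ι K (H : g) - algebraMap K (Env K g) (lam H))

/-- the Verma module `M(lam) = U(g)/I`. -/
abbrev Verma (lam : Module.Dual K S.h) : Type := Env K g ⧸ S.vermaIdeal lam

/-- the maximal proper submodule of the Verma module `M(lam)`,
i.e. the sum of all proper submodules. -/
def maxSub (lam : Module.Dual K S.h) : Submodule (Env K g) (S.Verma lam) :=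
  sSup {N : Submodule (Env K g) (S.Verma lam) | N ≠ ⊤}

/-- the simple module `L(lam)`, the unique simple quotient of `M(lam)`. -/
abbrev SimpleL (lam : Module.Dual K S.h) : Type := S.Verma lam ⧸ S.maxSub lam

/-- `H` is the coroot `h_α` of the root `α`:  `α(H) = 2` and `H ∈ [g^α, g^{-α}]`. -/
def IsCoroot (α : Module.Dual K S.h) (H : S.h) : Prop :=
  α H = 2 ∧ ∃ x ∈ adWeightSpace K g S.h α, ∃ y ∈ adWeightSpace K g S.h (-α),
    (H : g) = ⁅x, y⁆

/-- the dot-reflection `s_α · mu = mu - (mu + ρ)(h_α) α` associated to a root `α`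
with coroot `Hα`, relative to the half sum `ρ` of positive roots. -/
def dotReflect (ρ α : Module.Dual K S.h) (Hα : S.h) (mu : Module.Dual K S.h) :
    Module.Dual K S.h :=
  mu - ((mu + ρ) Hα) • α

/-- `ρ` is the global half sum of positive roots: its restriction to each `h ∩ g_n`
is the half sum `ρ_n` of positive roots of `g_n`. -/
def IsGlobalRho (ρ : Module.Dual K S.h) : Prop := ∀ n : ℕ, S.resDual n ρ = S.rhoN n

/-- `lam` is strongly linked to `mu` (relative to `ρ`). -/
inductive StronglyLinked (ρ : Module.Dual K S.h) :
    Module.Dual K S.h → Module.Dual K S.h → Prop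
  | refl (mu : Module.Dual K S.h) : StronglyLinked ρ mu mu
  | step {lam mu : Module.Dual K S.h} (α : Module.Dual K S.h) (Hα : S.h) :
      α ∈ S.pos → S.IsCoroot α Hα →
      S.wle (S.dotReflect ρ α Hα mu) mu →
      StronglyLinked ρ lam (S.dotReflect ρ α Hα mu) →
      StronglyLinked ρ lam mu

/-- `lam` is antidominant: `(lam + ρ)(h_α)` is not a positive integer
for any positive root `α`. -/
def IsAntidominant (ρ lam : Module.Dual K S.h) : Prop :=
  ∀ α ∈ S.pos, ∀ Hα : S.h, S.IsCoroot α Hα → ¬∃ k : ℕ, 0 < k ∧ (lam + ρ) Hα = (k : K)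

/-- `lam` is almost antidominant: `(lam + ρ)(h_α)` is a positive integer
for only finitely many positive roots `α`. -/
def IsAlmostAntidominant (ρ lam : Module.Dual K S.h) : Prop :=
  {α | α ∈ S.pos ∧ ∃ Hα : S.h, S.IsCoroot α Hα ∧
    ∃ k : ℕ, 0 < k ∧ (lam + ρ) Hα = (k : K)}.Finite

end Setup

namespace Setup

variable {K : Type} [Field K] [IsAlgClosed K] [CharZero K]
variable {g : Type} [LieRing g] [LieAlgebra K g]
variable (S : Setup K g)

/-- the reflection `s_α : mu ↦ mu - mu(h_α) α`, as a linear map on `h^*`. -/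
def reflectionMap (α : Module.Dual K S.h) (Hα : S.h) :
    Module.Dual K S.h →ₗ[K] Module.Dual K S.h where
  toFun mu := mu - mu Hα • α
  map_add' mu ν := by
    simp only [LinearMap.add_apply, add_smul]
    abel
  map_smul' c mu := by
    simp only [LinearMap.smul_apply, RingHom.id_apply, smul_sub, smul_smul, smul_eq_mul]

/-- the reflection `s_α` associated to a root `α` with coroot `Hα`,
as a linear automorphism of `h^*`. -/
def reflection (α : Module.Dual K S.h) (Hα : S.h) (h2 : α Hα = 2) :
    Module.Dual K S.h ≃ₗ[K] Module.Dual K S.h :=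
  LinearEquiv.ofInvolutive (S.reflectionMap α Hα) (by
    intro mu
    show S.reflectionMap α Hα (mu - mu Hα • α) = mu
    show (mu - mu Hα • α) - ((mu - mu Hα • α) Hα) • α = mu
    rw [LinearMap.sub_apply, LinearMap.smul_apply, h2, smul_eq_mul]
    module)

/-- the Weyl group of `g`, realized as the group of linear automorphisms of `h^*`
generated by the reflections in the roots. -/
def weylGroup : Subgroup (Module.Dual K S.h ≃ₗ[K] Module.Dual K S.h) :=
  Subgroup.closure
    {w | ∃ (α : Module.Dual K S.h) (Hα : S.h) (hc : S.IsCoroot α Hα),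
      IsRootOf K g S.h α ∧ w = S.reflection α Hα hc.1}

/-- the dot action `w · mu = w(mu + ρ) - ρ`. -/
def dotAct (ρ : Module.Dual K S.h) (w : Module.Dual K S.h ≃ₗ[K] Module.Dual K S.h)
    (mu : Module.Dual K S.h) : Module.Dual K S.h :=
  w (mu + ρ) - ρ

/-- the root lattice `Λ`, the `ℤ`-span of the roots in `h^*`. -/
def rootLattice : Submodule ℤ (Module.Dual K S.h) :=
  Submodule.span ℤ {α : Module.Dual K S.h | IsRootOf K g S.h α}

end Setup

variable {K : Type} [Field K] [IsAlgClosed K] [CharZero K]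
variable {g : Type} [LieRing g] [LieAlgebra K g]

lemma env_smul_comm {M : Type} [AddCommGroup M] [Module K M] [Module (Env K g) M]
    [IsScalarTower K (Env K g) M] (c : K) (r : Env K g) (m : M) :
    r • (c • m) = c • (r • m) := by
  rw [← algebraMap_smul (Env K g) c m, ← mul_smul, ← Algebra.commutes, mul_smul,
    algebraMap_smul]

namespace Setup

variable (S : Setup K g)

section Modules

variable (M : Type) [AddCommGroup M] [Module K M] [Module (Env K g) M]
  [IsScalarTower K (Env K g) M]

/-- the `lam`-weight space of a `U(g)`-module `M`. -/
def wtSpace (lam : Module.Dual K S.h) : Submodule K M where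
  carrier := {m | ∀ H : S.h, UniversalEnvelopingAlgebra.ι K (H : g) • m = lam H • m}
  add_mem' := by
    intro a b ha hb H
    rw [smul_add, ha H, hb H, smul_add]
  zero_mem' := by
    intro H
    rw [smul_zero, smul_zero]
  smul_mem' := by
    intro c x hx H
    rw [env_smul_comm, hx H, smul_comm]

/-- the support of `M`: the set of `h`-weights of `M`. -/
def support : Set (Module.Dual K S.h) := {lam | S.wtSpace M lam ≠ ⊥}

/-- `M` is an object of the extended category `O-bar`:  it is an `h`-weight module with
finite-dimensional weight spaces and `U(n⁺) ⬝ v` is finite dimensional for every `v ∈ M`. -/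
structure InO : Prop where
  indep : iSupIndep fun lam : Module.Dual K S.h => S.wtSpace M lam
  span : (⨆ lam : Module.Dual K S.h, S.wtSpace M lam) = ⊤
  finite : ∀ lam : Module.Dual K S.h, FiniteDimensional K (S.wtSpace M lam)
  locFin : ∀ v : M, ∃ N : Submodule K M, FiniteDimensional K N ∧ v ∈ N ∧
    ∀ x ∈ S.nplus, ∀ m ∈ N, UniversalEnvelopingAlgebra.ι K x • m ∈ N

end Modules

end Setup

/-- a `U(g)`-module is indecomposable if it is nonzero and is not the direct sum of two
nonzero submodules. -/
def Indecomposable (M : Type) [AddCommGroup M] [Module (Env K g) M] : Prop :=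
  (⊤ : Submodule (Env K g) M) ≠ ⊥ ∧
    ∀ N₁ N₂ : Submodule (Env K g) M, IsCompl N₁ N₂ → N₁ = ⊥ ∨ N₂ = ⊥

/-- the subquotient `N₂ / N₁` of a pair of submodules. -/
abbrev subQuot {M : Type} [AddCommGroup M] [Module (Env K g) M]
    (N₁ N₂ : Submodule (Env K g) M) : Type :=
  N₂ ⧸ (N₁.comap N₂.subtype)

end Paper

open Function Set DirectSum LinearMap

namespace Module.End

variable {A M : Type*} [Ring A] [AddCommGroup M] [Module A M] (f : Module.End A M)

theorem mem_iSup_ker_pow {v : M} : v ∈ ⨆ k, ker (f ^ k) ↔ ∃ k, (f ^ k) v = 0 := by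
  have hdir : Directed (· ≤ ·) fun k => ker (f ^ k) := f.iterateKer.monotone.directed_le
  simp only [Submodule.mem_iSup_of_directed _ hdir, mem_ker]

theorem mem_iInf_range_pow {v : M} : v ∈ ⨅ k, range (f ^ k) ↔ ∀ k, ∃ u, (f ^ k) u = v := by
  simp only [Submodule.mem_iInf, LinearMap.mem_range]

theorem disjoint_iSup_ker_pow_iInf_range_pow [IsNoetherian A M] :
    Disjoint (⨆ k, ker (f ^ k)) (⨅ k, range (f ^ k)) := by
  obtain ⟨n, hker, hdisj⟩ :=
    (f.eventually_iSup_ker_pow_eq.and f.eventually_disjoint_ker_pow_range_pow).exists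
  rw [hker]
  exact hdisj.mono_right (iInf_le _ n)

theorem codisjoint_iSup_ker_pow_iInf_range_pow [IsArtinian A M] :
    Codisjoint (⨆ k, ker (f ^ k)) (⨅ k, range (f ^ k)) := by
  obtain ⟨n, hrange, hcodisj⟩ :=
    (f.eventually_iInf_range_pow_eq.and f.eventually_codisjoint_ker_pow_range_pow).exists
  rw [hrange]
  exact hcodisj.mono_left (le_iSup (fun k => ker (f ^ k)) n)

theorem coe_pow_restrict_apply {p : Submodule A M} (hf : MapsTo f p p) (k : ℕ) (x : p) :
    ((f.restrict hf ^ k) x : M) = (f ^ k) x := by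
  induction k with
  | zero => rfl
  | succ k ih =>
    rw [pow_succ', mul_apply, pow_succ', mul_apply, ← ih]
    rfl

theorem bijective_or_forall_exists_pow_apply_eq_zero_of_isCompl
    (hfit : IsCompl (⨆ k, ker (f ^ k)) (⨅ k, range (f ^ k)))
    (hind : ∀ N₁ N₂ : Submodule A M, IsCompl N₁ N₂ → N₁ = ⊥ ∨ N₂ = ⊥) :
    Bijective f ∨ ∀ v, ∃ k, (f ^ k) v = 0 := by
  rcases hind _ _ hfit with hnil | hcore
  · rw [hnil] at hfit
    have hsurj := eq_top_of_bot_isCompl hfit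
    refine Or.inl ⟨?_, ?_⟩
    · rw [← ker_eq_bot, eq_bot_iff, ← hnil]
      exact (pow_one f).symm ▸ le_iSup (fun k => ker (f ^ k)) 1
    · rw [← range_eq_top, eq_top_iff, ← hsurj]
      exact (pow_one f) ▸ iInf_le (fun k => range (f ^ k)) 1
  · rw [hcore] at hfit
    exact Or.inr fun v => (mem_iSup_ker_pow f).1 (eq_top_of_isCompl_bot hfit ▸ Submodule.mem_top)

end Module.End

namespace DirectSum.IsInternal

variable {ι R M : Type*} [DecidableEq ι] [Ring R] [AddCommGroup M] [Module R M]
  {W : ι → Submodule R M} (hW : IsInternal W) {f : M →ₗ[R] M} (hf : ∀ i, MapsTo f (W i) (W i))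

theorem ofBijective_coeLinearMap_symm_map_of_mapsTo (v : M) (i : ι) :
    (LinearEquiv.ofBijective (coeLinearMap W) hW).symm (f v) i =
      f.restrict (hf i) ((LinearEquiv.ofBijective (coeLinearMap W) hW).symm v i) := by
  induction v using Submodule.iSup_induction W (hW.submodule_iSup_eq_top ▸ Submodule.mem_top)
  with
  | mem j w hw =>
    rcases eq_or_ne j i with rfl | hji
    · rw [hW.ofBijective_coeLinearMap_of_mem (hf j hw), hW.ofBijective_coeLinearMap_of_mem hw]
      rfl
    · rw [hW.ofBijective_coeLinearMap_of_mem_ne hji (hf j hw),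
        hW.ofBijective_coeLinearMap_of_mem_ne hji hw, map_zero]
  | zero => simp only [map_zero, DirectSum.zero_apply]
  | add v w hv hw => simp only [map_add, DirectSum.add_apply, hv, hw]

theorem ofBijective_coeLinearMap_symm_pow_map_of_mapsTo (k : ℕ) (v : M) (i : ι) :
    (LinearEquiv.ofBijective (coeLinearMap W) hW).symm ((f ^ k) v) i =
      (f.restrict (hf i) ^ k) ((LinearEquiv.ofBijective (coeLinearMap W) hW).symm v i) := by
  induction k with
  | zero => rfl
  | succ k ih =>
    rw [pow_succ', Module.End.mul_apply, hW.ofBijective_coeLinearMap_symm_map_of_mapsTo hf, ih,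
      pow_succ', Module.End.mul_apply]

end DirectSum.IsInternal

namespace Module.End

variable {ι R A M : Type*} [CommRing R] [Ring A] [Algebra R A]
  [AddCommGroup M] [Module R M] [Module A M] [IsScalarTower R A M] {W : ι → Submodule R M}

theorem restrictScalars_pow_apply (f : Module.End A M) (k : ℕ) (v : M) :
    (f.restrictScalars R ^ k) v = (f ^ k) v := by
  simp only [pow_apply]
  rfl

theorem codisjoint_iSup_ker_pow_iInf_range_pow_of_iSup_eq_top (hW : ⨆ i, W i = ⊤)
    [∀ i, IsArtinian R (W i)] (f : Module.End A M) (hf : ∀ i, MapsTo f (W i) (W i)) :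
    Codisjoint (⨆ k, ker (f ^ k)) (⨅ k, range (f ^ k)) := by
  have hfR : ∀ i, MapsTo (f.restrictScalars R) (W i) (W i) := hf
  rw [codisjoint_iff_le_sup]
  rintro v -
  induction v using Submodule.iSup_induction W (hW ▸ Submodule.mem_top) with
  | mem i w hw =>
    set fi := (f.restrictScalars R).restrict (hfR i)
    have hcoe (k : ℕ) (x : W i) : ((fi ^ k) x : M) = (f ^ k) x := by
      rw [coe_pow_restrict_apply, restrictScalars_pow_apply]
    obtain ⟨a, ha, b, hb, hab⟩ := Submodule.mem_sup.1
      (((codisjoint_iSup_ker_pow_iInf_range_pow fi).eq_top ▸ Submodule.mem_top :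
        (⟨w, hw⟩ : W i) ∈ _ ⊔ _))
    obtain rfl : (a : M) + b = w := congrArg Subtype.val hab
    refine Submodule.add_mem_sup ((mem_iSup_ker_pow f).2 ?_) ((mem_iInf_range_pow f).2 ?_)
    · obtain ⟨k, hk⟩ := (mem_iSup_ker_pow fi).1 ha
      exact ⟨k, by rw [← hcoe, hk, Submodule.coe_zero]⟩
    · intro k
      obtain ⟨u, hu⟩ := (mem_iInf_range_pow fi).1 hb k
      exact ⟨u, by rw [← hcoe, hu]⟩
  | zero => exact Submodule.zero_mem _
  | add v w hv hw => exact Submodule.add_mem _ hv hw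

theorem disjoint_iSup_ker_pow_iInf_range_pow_of_isInternal [DecidableEq ι] (hW : IsInternal W)
    [∀ i, IsNoetherian R (W i)] (f : Module.End A M) (hf : ∀ i, MapsTo f (W i) (W i)) :
    Disjoint (⨆ k, ker (f ^ k)) (⨅ k, range (f ^ k)) := by
  have hfR : ∀ i, MapsTo (f.restrictScalars R) (W i) (W i) := hf
  set π := (LinearEquiv.ofBijective (coeLinearMap W) hW).symm
  have hπ (k : ℕ) (v : M) (i : ι) :
      π ((f ^ k) v) i = ((f.restrictScalars R).restrict (hfR i) ^ k) (π v i) := by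
    rw [← hW.ofBijective_coeLinearMap_symm_pow_map_of_mapsTo hfR, restrictScalars_pow_apply]
  rw [Submodule.disjoint_def]
  intro v hv0 hv1
  suffices π v = 0 by simpa using congrArg π.symm this
  ext i : 1
  rw [DirectSum.zero_apply]
  obtain ⟨k, hk⟩ := (mem_iSup_ker_pow f).1 hv0
  set fi := (f.restrictScalars R).restrict (hfR i)
  refine Submodule.disjoint_def.1 (disjoint_iSup_ker_pow_iInf_range_pow fi) _
    ((mem_iSup_ker_pow fi).2 ⟨k, ?_⟩) ((mem_iInf_range_pow fi).2 fun k => ?_)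
  · rw [← hπ, hk, map_zero, DirectSum.zero_apply]
  · obtain ⟨u, hu⟩ := (mem_iInf_range_pow f).1 hv1 k
    exact ⟨π u i, by rw [← hπ, hu]⟩

theorem isCompl_iSup_ker_pow_iInf_range_pow_of_isInternal [DecidableEq ι] (hW : IsInternal W)
    [∀ i, IsArtinian R (W i)] [∀ i, IsNoetherian R (W i)]
    (f : Module.End A M) (hf : ∀ i, MapsTo f (W i) (W i)) :
    IsCompl (⨆ k, ker (f ^ k)) (⨅ k, range (f ^ k)) :=
  ⟨disjoint_iSup_ker_pow_iInf_range_pow_of_isInternal hW f hf,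
    codisjoint_iSup_ker_pow_iInf_range_pow_of_iSup_eq_top hW.submodule_iSup_eq_top f hf⟩

end Module.End

namespace Paper

theorem Setup.mapsTo_wtSpace {K g : Type} [Field K] [IsAlgClosed K] [CharZero K] [LieRing g]
    [LieAlgebra K g] (S : Setup K g) {M : Type} [AddCommGroup M] [Module K M]
    [Module (Env K g) M] [IsScalarTower K (Env K g) M] (φ : Module.End (Env K g) M)
    (lam : Module.Dual K S.h) : MapsTo φ (S.wtSpace M lam) (S.wtSpace M lam) := by
  intro v hv H
  change UniversalEnvelopingAlgebra.ι K (H : g) • φ v = lam H • φ v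
  rw [← map_smul φ, hv H, LinearMap.map_smul_of_tower]

theorem endomorphism_bijective_or_locally_nilpotent_general
    (K : Type) [Field K] [IsAlgClosed K] [CharZero K]
    (g : Type) [LieRing g] [LieAlgebra K g] (S : Setup K g)
    (M : Type) [AddCommGroup M] [Module K M] [Module (Env K g) M]
    [IsScalarTower K (Env K g) M]
    (hM : S.InO M) (hInd : Indecomposable (K := K) (g := g) M) (φ : Module.End (Env K g) M) :
    Function.Bijective φ ∨ ∀ v : M, ∃ k : ℕ, (⇑φ)^[k] v = 0 := by
  classical
  have := hM.finite
  have hfit := Module.End.isCompl_iSup_ker_pow_iInf_range_pow_of_isInternal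
    (isInternal_submodule_of_iSupIndep_of_iSup_eq_top hM.indep hM.span) φ (S.mapsTo_wtSpace φ)
  simpa only [Module.End.pow_apply] using
    φ.bijective_or_forall_exists_pow_apply_eq_zero_of_isCompl hfit hInd.2

/-- Every `g`-module endomorphism of an indecomposable object `M` of
`O-bar` is either an automorphism or locally nilpotent. -/
theorem endomorphism_bijective_or_locally_nilpotent
    (K : Type) [Field K] [IsAlgClosed K] [CharZero K]
    (g : Type) [LieRing g] [LieAlgebra K g] (S : Setup K g) (hDynkin : S.IsDynkin)
    (M : Type) [AddCommGroup M] [Module K M] [Module (Env K g) M]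
    [IsScalarTower K (Env K g) M]
    (hM : S.InO M) (hInd : Indecomposable (K := K) (g := g) M) (φ : Module.End (Env K g) M) :
    Function.Bijective φ ∨ ∀ v : M, ∃ k : ℕ, (⇑φ)^[k] v = 0 :=
  endomorphism_bijective_or_locally_nilpotent_general K g S M hM hInd φ

end Paper
end
end

section
/- Let g be a root-reductive Lie algebra with splitting maximal toral subalgebra h and Dynkin Borel subalgebra b ⊇ h. For every indecomposable object M of the extended category O-bar, the endomorphism ring End_{O-bar}(M) is a local ring. -/
noncomputable section
/-!
Every endomorphism `f` of an object `M` of `O-bar` preserves the finite-dimensional weight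
spaces, so it has an eigenvalue `c`. The Fitting decompositions of the weight spaces with
respect to `f - c` add up to a decomposition of `M` into the submodules `⋃ ker (f - c)ⁿ` and
`⋂ im (f - c)ⁿ`. If `M` is indecomposable, the first summand, which contains an eigenvector,
is all of `M`, so `f - c` is locally nilpotent: then `f` is invertible if `c ≠ 0`, and `1 - f`
is invertible if `c = 0`.
-/

namespace LinearMap

variable {R M : Type*} [Ring R] [AddCommGroup M] [Module R M] {f : Module.End R M}

theorem coe_pow_restrict_apply {W : Submodule R M} (hW : ∀ x ∈ W, f x ∈ W) (n : ℕ) (x : W) :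
    ((f.restrict hW ^ n) x : M) = (f ^ n) x := by
  rw [Module.End.pow_restrict, coe_restrict_apply]

theorem mem_iSup_ker_pow_iff {x : M} : x ∈ ⨆ n, ker (f ^ n) ↔ ∃ n, (f ^ n) x = 0 :=
  Submodule.mem_iSup_of_directed _ f.iterateKer.monotone.directed_le

theorem mem_range_pow_restrict_of_isCompl {W W' : Submodule R M} (hW : ∀ x ∈ W, f x ∈ W)
    (hW' : ∀ x ∈ W', f x ∈ W') (hWW' : IsCompl W W') {n : ℕ} {x : M} (hx : x ∈ W)
    (hxn : x ∈ range (f ^ n)) : (⟨x, hx⟩ : W) ∈ range (f.restrict hW ^ n) := by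
  obtain ⟨y, rfl⟩ := hxn
  obtain ⟨w, hw, w', hw', rfl⟩ :=
    Submodule.mem_sup.mp (hWW'.codisjoint.eq_top ▸ Submodule.mem_top (x := y))
  have hfw' : (f ^ n) w' = 0 := by
    refine Submodule.disjoint_def.mp hWW'.disjoint _ ?_
      (Module.End.pow_apply_mem_of_forall_mem n hW' w' hw')
    simpa using W.sub_mem hx (Module.End.pow_apply_mem_of_forall_mem n hW w hw)
  exact ⟨⟨w, hw⟩, Subtype.ext (by simp [coe_pow_restrict_apply, hfw'])⟩

section FiniteLength

variable {W : Submodule R M} [IsNoetherian R W] [IsArtinian R W]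

theorem eq_zero_of_mem_iSup_ker_pow_of_mem_iInf_range_pow {W' : Submodule R M}
    (hW : ∀ x ∈ W, f x ∈ W) (hW' : ∀ x ∈ W', f x ∈ W') (hWW' : IsCompl W W') {x : M}
    (hx : x ∈ W) (hker : x ∈ ⨆ n, ker (f ^ n)) (hrange : x ∈ ⨅ n, range (f ^ n)) :
    x = 0 := by
  have hfit := (f.restrict hW).isCompl_iSup_ker_pow_iInf_range_pow
  obtain ⟨n, hn⟩ := mem_iSup_ker_pow_iff.mp hker
  have hker' : (⟨x, hx⟩ : W) ∈ ⨆ n, ker (f.restrict hW ^ n) :=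
    mem_iSup_ker_pow_iff.mpr ⟨n, Subtype.ext (by simpa [coe_pow_restrict_apply] using hn)⟩
  have hrange' : (⟨x, hx⟩ : W) ∈ ⨅ n, range (f.restrict hW ^ n) :=
    Submodule.mem_iInf _ |>.mpr fun n ↦ mem_range_pow_restrict_of_isCompl hW hW' hWW' hx
      (Submodule.mem_iInf _ |>.mp hrange n)
  simpa using Submodule.disjoint_def.mp hfit.disjoint _ hker' hrange'

theorem le_iSup_ker_pow_sup_iInf_range_pow (hW : ∀ x ∈ W, f x ∈ W) :
    W ≤ (⨆ n, ker (f ^ n)) ⊔ ⨅ n, range (f ^ n) := by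
  intro x hx
  have hfit := (f.restrict hW).isCompl_iSup_ker_pow_iInf_range_pow
  obtain ⟨a, ha, b, hb, hab⟩ :=
    Submodule.mem_sup.mp (hfit.codisjoint.eq_top ▸ Submodule.mem_top (x := (⟨x, hx⟩ : W)))
  rw [show x = a + b from congrArg Subtype.val hab.symm]
  refine Submodule.add_mem_sup ?_ (Submodule.mem_iInf _ |>.mpr fun n ↦ ?_)
  · obtain ⟨n, hn⟩ := mem_iSup_ker_pow_iff.mp ha
    exact mem_iSup_ker_pow_iff.mpr
      ⟨n, by simpa [coe_pow_restrict_apply] using congrArg Subtype.val hn⟩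
  · obtain ⟨z, hz⟩ := Submodule.mem_iInf _ |>.mp hb n
    exact ⟨z, by rw [← coe_pow_restrict_apply hW, hz]⟩

end FiniteLength

theorem isCompl_iSup_ker_pow_iInf_range_pow_of_iSupIndep {ι : Type*} {V : ι → Submodule R M}
    (hind : iSupIndep V) (htop : ⨆ i, V i = ⊤) [∀ i, IsNoetherian R (V i)]
    [∀ i, IsArtinian R (V i)] (hV : ∀ i, ∀ x ∈ V i, f x ∈ V i) :
    IsCompl (⨆ n, ker (f ^ n)) (⨅ n, range (f ^ n)) := by
  have hsup : ∀ t : Set ι, ∀ x ∈ ⨆ i ∈ t, V i, f x ∈ ⨆ i ∈ t, V i := fun t ↦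
    iSup₂_le (f := fun i _ ↦ V i) (a := (⨆ i ∈ t, V i).comap f) fun i hi x hx ↦
      le_biSup V hi (hV i x hx)
  constructor
  · refine Submodule.disjoint_def.mpr fun x hker hrange ↦ ?_
    -- `x` lies in a finite sum of the `V i`, which has the invariant complement spanned by the rest
    obtain ⟨s, hs⟩ := Submodule.exists_finset_of_mem_iSup V (htop ▸ Submodule.mem_top (x := x))
    have : IsNoetherian R (⨆ i ∈ (s : Set ι), V i : Submodule R M) := by
      rw [← iSup_subtype'']; infer_instance
    have : IsArtinian R (⨆ i ∈ (s : Set ι), V i : Submodule R M) := by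
      rw [← iSup_subtype'']; infer_instance
    refine eq_zero_of_mem_iSup_ker_pow_of_mem_iInf_range_pow (hsup s) (hsup (↑s)ᶜ)
      ⟨hind.disjoint_biSup_biSup disjoint_compl_right, ?_⟩ hs hker hrange
    refine codisjoint_iff_le_sup.mpr (htop ▸ iSup_le fun i ↦ ?_)
    by_cases hi : i ∈ s
    · exact le_sup_of_le_left (le_biSup V (Finset.mem_coe.mpr hi))
    · exact le_sup_of_le_right (le_biSup V (Set.mem_compl (Finset.mem_coe.not.mpr hi)))
  · exact codisjoint_iff_le_sup.mpr
      (htop ▸ iSup_le fun i ↦ le_iSup_ker_pow_sup_iInf_range_pow (hV i))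

end LinearMap

namespace Module.End

section LocallyNilpotent

variable {R M : Type*} [Ring R] [AddCommGroup M] [Module R M]

def IsLocallyNilpotent (u : Module.End R M) : Prop := ∀ x, ∃ n, (u ^ n) x = 0

theorem IsLocallyNilpotent.mul_of_commute {a u : Module.End R M} (hu : u.IsLocallyNilpotent)
    (h : Commute a u) : (a * u).IsLocallyNilpotent := fun x ↦ by
  obtain ⟨n, hn⟩ := hu x
  exact ⟨n, by rw [h.mul_pow, mul_apply, hn, map_zero]⟩

theorem IsLocallyNilpotent.isUnit_one_add {u : Module.End R M} (hu : u.IsLocallyNilpotent) :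
    IsUnit (1 + u) := by
  have hgeom : ∀ x, ∃ n, ((1 : Module.End R M) - (-u) ^ n) x = x := fun x ↦ by
    obtain ⟨n, hn⟩ := hu x
    exact ⟨n, by rw [LinearMap.sub_apply, one_apply, neg_pow, mul_apply, hn, map_zero,
      sub_zero]⟩
  rw [isUnit_iff]
  constructor
  · refine (injective_iff_map_eq_zero _).mpr fun x hx ↦ ?_
    obtain ⟨n, hn⟩ := hgeom x
    rw [← hn, ← geom_sum_mul_neg, sub_neg_eq_add, mul_apply, hx, map_zero]
  · intro x
    obtain ⟨n, hn⟩ := hgeom x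
    exact ⟨(∑ i ∈ Finset.range n, (-u) ^ i) x, by
      rw [← mul_apply, ← sub_neg_eq_add, mul_neg_geom_sum, hn]⟩

theorem IsLocallyNilpotent.isUnit_add {a u : Module.End R M} (hu : u.IsLocallyNilpotent)
    (ha : IsUnit a) (h : Commute a u) : IsUnit (a + u) := by
  obtain ⟨a, rfl⟩ := ha
  have hinv : (↑a⁻¹ * u).IsLocallyNilpotent := hu.mul_of_commute h.units_inv_left
  convert a.isUnit.mul hinv.isUnit_one_add using 1
  rw [mul_add, mul_one, Units.mul_inv_cancel_left]

theorem isLocallyNilpotent_of_isCompl_iSup_ker_pow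
    (hM : ∀ N₁ N₂ : Submodule R M, IsCompl N₁ N₂ → N₁ = ⊥ ∨ N₂ = ⊥) {u : Module.End R M}
    (hfit : IsCompl (⨆ n, LinearMap.ker (u ^ n)) (⨅ n, LinearMap.range (u ^ n))) {v : M}
    (hv : v ≠ 0) (huv : u v = 0) : u.IsLocallyNilpotent := by
  rcases hM _ _ hfit with hker | hrange
  · have : v ∈ ⨆ n, LinearMap.ker (u ^ n) :=
      LinearMap.mem_iSup_ker_pow_iff.mpr ⟨1, by simpa using huv⟩
    exact absurd (by simpa [hker] using this) hv
  · have htop := codisjoint_bot.mp (hrange ▸ hfit.codisjoint)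
    exact fun x ↦ LinearMap.mem_iSup_ker_pow_iff.mp (htop ▸ Submodule.mem_top)

end LocallyNilpotent

theorem exists_eigenvector_of_iSup_eq_top {K M ι : Type*} [Field K] [IsAlgClosed K]
    [AddCommGroup M] [Module K M] [Nontrivial M] {V : ι → Submodule K M}
    (htop : ⨆ i, V i = ⊤) [∀ i, FiniteDimensional K (V i)] {f : Module.End K M}
    (hV : ∀ i, ∀ x ∈ V i, f x ∈ V i) : ∃ c : K, ∃ v : M, v ≠ 0 ∧ f v = c • v := by
  obtain ⟨i, hi⟩ : ∃ i, V i ≠ ⊥ := by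
    by_contra! h
    simp [h] at htop
  have : Nontrivial (V i) := Submodule.nontrivial_iff_ne_bot.mpr hi
  obtain ⟨c, hc⟩ := exists_eigenvalue (f.restrict (hV i))
  obtain ⟨v, hv⟩ := hc.exists_hasEigenvector
  exact ⟨c, v, by simpa using hv.2, congrArg Subtype.val hv.apply_eq_smul⟩

end Module.End

theorem IsLocalRing.of_forall_exists_isLocallyNilpotent_sub {K A M : Type*} [Field K] [Ring A]
    [Algebra K A] [AddCommGroup M] [Module A M] [Module K M] [IsScalarTower K A M]
    [Nontrivial (Module.End A M)]
    (h : ∀ f : Module.End A M, ∃ c : K, (f - algebraMap K _ c).IsLocallyNilpotent) :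
    IsLocalRing (Module.End A M) := by
  refine .of_isUnit_or_isUnit_one_sub_self fun f ↦ ?_
  obtain ⟨c, hc⟩ := h f
  rcases eq_or_ne c 0 with rfl | hc0
  · right
    simpa [sub_eq_add_neg] using (hc.mul_of_commute (Commute.neg_one_left _)).isUnit_one_add
  · left
    simpa using hc.isUnit_add ((isUnit_iff_ne_zero.mpr hc0).map (algebraMap K _))
      (Algebra.commutes c _)

namespace Paper.Setup

variable {K g : Type} [Field K] [IsAlgClosed K] [CharZero K] [LieRing g] [LieAlgebra K g]
variable {S : Setup K g}
variable {M : Type} [AddCommGroup M] [Module K M] [Module (Env K g) M]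
  [IsScalarTower K (Env K g) M]

variable (S) in
theorem apply_mem_wtSpace (f : Module.End (Env K g) M)
    {lam : Module.Dual K S.h} {x : M} (hx : x ∈ S.wtSpace M lam) : f x ∈ S.wtSpace M lam :=
  fun H ↦ by rw [← f.map_smul, hx H, LinearMap.map_smul_of_tower]

theorem InO.isCompl_iSup_ker_pow_iInf_range_pow (hM : S.InO M) (f : Module.End (Env K g) M) :
    IsCompl (⨆ n, LinearMap.ker (f ^ n)) (⨅ n, LinearMap.range (f ^ n)) := by
  have := hM.finite
  have hpow : ∀ n, f.restrictScalars K ^ n = (f ^ n).restrictScalars K := fun n ↦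
    LinearMap.ext fun x ↦ by simp [Module.End.pow_apply]
  have := LinearMap.isCompl_iSup_ker_pow_iInf_range_pow_of_iSupIndep (f := f.restrictScalars K)
    hM.indep hM.span fun _ _ ↦ S.apply_mem_wtSpace f
  simpa only [hpow, LinearMap.ker_restrictScalars, LinearMap.range_restrictScalars,
    ← Submodule.restrictScalars_iSup, ← Submodule.restrictScalars_iInf,
    Submodule.isCompl_restrictScalars_iff] using this

theorem InO.exists_eigenvector [Nontrivial M] (hM : S.InO M) (f : Module.End (Env K g) M) :
    ∃ c : K, ∃ v : M, v ≠ 0 ∧ f v = c • v :=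
  have := hM.finite
  Module.End.exists_eigenvector_of_iSup_eq_top (f := f.restrictScalars K) hM.span
    fun _ _ ↦ S.apply_mem_wtSpace f

end Paper.Setup

namespace Paper

theorem endomorphism_ring_isLocalRing_general
    (K : Type) [Field K] [IsAlgClosed K] [CharZero K]
    (g : Type) [LieRing g] [LieAlgebra K g] (S : Setup K g)
    (M : Type) [AddCommGroup M] [Module K M] [Module (Env K g) M]
    [IsScalarTower K (Env K g) M]
    (hM : S.InO M) (hInd : Indecomposable (K := K) (g := g) M) :
    IsLocalRing (Module.End (Env K g) M) := by
  have : Nontrivial M := (Submodule.nontrivial_iff (Env K g)).mp (nontrivial_of_ne _ _ hInd.1)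
  refine IsLocalRing.of_forall_exists_isLocallyNilpotent_sub (K := K) fun f ↦ ?_
  obtain ⟨c, v, hv, hfv⟩ := hM.exists_eigenvector f
  refine ⟨c, Module.End.isLocallyNilpotent_of_isCompl_iSup_ker_pow hInd.2
    (hM.isCompl_iSup_ker_pow_iInf_range_pow _) hv ?_⟩
  simp [hfv]

/-- For every indecomposable object `M` of `O-bar`, the endomorphism
ring `End(M)` is a local ring. -/
theorem endomorphism_ring_isLocalRing
    (K : Type) [Field K] [IsAlgClosed K] [CharZero K]
    (g : Type) [LieRing g] [LieAlgebra K g] (S : Setup K g) (hDynkin : S.IsDynkin)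
    (M : Type) [AddCommGroup M] [Module K M] [Module (Env K g) M]
    [IsScalarTower K (Env K g) M]
    (hM : S.InO M) (hInd : Indecomposable (K := K) (g := g) M) :
    IsLocalRing (Module.End (Env K g) M) :=
  endomorphism_ring_isLocalRing_general K g S M hM hInd

end Paper
end
end
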